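/- Suppose u ∈ H with S(u) ≤ m (the ground-state level) and K_{1,1}(u) ≥ 0, where m > 0. Then Σ_{j=1}^m ‖∇u_j‖² ≤ (N+4)/2 · m. Consequently, any solution of the coupled NLS remaining in A⁺_{1,1} has uniformly bounded H¹-gradient norms. -/
import Mathlib


open MeasureTheory

/-- The action functional `S(u)`. -/
noncomputable def Sfun (N m : ℕ) (p : ℝ) (a : Fin m → Fin m → ℝ)
    (u : Fin m → EuclideanSpace ℝ (Fin N) → ℂ) : ℝ :=
  (1/2) * (∑ j, ((∫ x, ‖u j x‖^2) + (∫ x, ‖x‖^2 * ‖u j x‖^2)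
      + (∫ x, ‖fderiv ℝ (u j) x‖^2)))
    - (1/(2*p)) * ∑ j, ∑ k, a j k * ∫ x, (‖u j x‖ * ‖u k x‖) ^ p

/-- The constraint functional `K_{α,β}(u)`. -/
noncomputable def Kfun (N m : ℕ) (p α β : ℝ) (a : Fin m → Fin m → ℝ)
    (u : Fin m → EuclideanSpace ℝ (Fin N) → ℂ) : ℝ :=
  (1/2) * (∑ j, ((2*α + ((N:ℝ) - 2)*β) * (∫ x, ‖fderiv ℝ (u j) x‖^2)
      + (2*α + (N:ℝ)*β) * (∫ x, ‖u j x‖^2)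
      + (2*α + ((N:ℝ) + 2)*β) * (∫ x, ‖x‖^2 * ‖u j x‖^2)))
    - (2*p*α + (N:ℝ)*β)/(2*p) * ∑ j, ∑ k, a j k * ∫ x, (‖u j x‖ * ‖u k x‖) ^ p

/-- If `S(u) ≤ m` (the ground state level) and `K_{1,1}(u) ≥ 0`, then the
gradient terms are bounded: `Σ_j ‖∇u_j‖² ≤ (N+4)/2 · m`. -/
theorem stmt_13 (N m : ℕ) (hN : 1 ≤ N) (p : ℝ) (hp : 2 ≤ p)
    (a : Fin m → Fin m → ℝ) (ha : ∀ j k, 0 ≤ a j k)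
    (mgs : ℝ) (hmgs : 0 < mgs)
    (u : Fin m → EuclideanSpace ℝ (Fin N) → ℂ)
    (hS : Sfun N m p a u ≤ mgs)
    (hK : 0 ≤ Kfun N m p 1 1 a u) :
    ∑ j, (∫ x, ‖fderiv ℝ (u j) x‖^2) ≤ ((N:ℝ) + 4)/2 * mgs := by
  have hp0 : (0:ℝ) < p := by linarith
  set A := ∑ j, (∫ x, ‖u j x‖^2) with hAdef
  set B := ∑ j, (∫ x, ‖x‖^2 * ‖u j x‖^2) with hBdef
  set C := ∑ j, (∫ x, ‖fderiv ℝ (u j) x‖^2) with hCdef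
  set Q := ∑ j, ∑ k, a j k * ∫ x, (‖u j x‖ * ‖u k x‖) ^ p with hQdef
  have hA : 0 ≤ A := Finset.sum_nonneg fun j _ =>
    integral_nonneg fun x => by positivity
  have hQ : 0 ≤ Q := Finset.sum_nonneg fun j _ => Finset.sum_nonneg fun k _ =>
    mul_nonneg (ha j k) (integral_nonneg fun x =>
      Real.rpow_nonneg (mul_nonneg (norm_nonneg _) (norm_nonneg _)) p)
  have hSval : Sfun N m p a u = (1/2)*(A+B+C) - (1/(2*p))*Q := by
    simp [Sfun, hAdef, hBdef, hCdef, hQdef, Finset.sum_add_distrib]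
  have hKval : Kfun N m p 1 1 a u
      = (1/2)*(((N:ℝ))*C + ((N:ℝ)+2)*A + ((N:ℝ)+4)*B) - (2*p+(N:ℝ))/(2*p)*Q := by
    simp [Kfun, hAdef, hBdef, hCdef, hQdef, Finset.sum_add_distrib,
      Finset.mul_sum]
    congr 1
    · congr 1
      exact Finset.sum_congr rfl fun j _ => by ring
    · exact Finset.sum_congr rfl fun j _ => by ring
  rw [hSval] at hS
  rw [hKval] at hK
  have key : ((N:ℝ)+4) * ((1/2)*(A+B+C) - (1/(2*p))*Q)
      - ((1/2)*(((N:ℝ))*C + ((N:ℝ)+2)*A + ((N:ℝ)+4)*B) - (2*p+(N:ℝ))/(2*p)*Q)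
      = 2*C + A + ((p-2)/p)*Q := by
    field_simp
    ring
  have hterm : 0 ≤ ((p-2)/p)*Q :=
    mul_nonneg (div_nonneg (by linarith) hp0.le) hQ
  have hN4 : (0:ℝ) < (N:ℝ)+4 := by positivity
  nlinarith [mul_le_mul_of_nonneg_left hS hN4.le]
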